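/- arXiv:2001.02155 — 5 statements merged into one kernel-verified Lean document; each statement's English description precedes it below -/
import Mathlib

section
/- The 'before' connective on coherence spaces is self-dual: for coherence spaces A and B, (A◁B)⊥ = A⊥◁B⊥ (the webs are equal and the coherence relations coincide). -/
/-- A coherence space: a web (here a type) with a reflexive symmetric coherence relation. -/
structure CohSpace (α : Type) where
  coh : α → α → Prop
  refl : ∀ a, coh a a
  symm : ∀ a b, coh a b → coh b a

namespace CohSpace

/-- Strict coherence. -/
def scoh {α : Type} (A : CohSpace α) (a b : α) : Prop := A.coh a b ∧ a ≠ b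

/-- The non-commutative `before` connective `A ◁ B` on coherence spaces. -/
def before {α β : Type} (A : CohSpace α) (B : CohSpace β) : CohSpace (α × β) where
  coh p q := p = q ∨ B.scoh p.2 q.2 ∨ (p.2 = q.2 ∧ A.scoh p.1 q.1)
  refl p := Or.inl rfl
  symm := by
    rintro p q (rfl | ⟨h1, h2⟩ | ⟨h1, h2, h3⟩)
    · exact Or.inl rfl
    · exact Or.inr (Or.inl ⟨B.symm _ _ h1, Ne.symm h2⟩)
    · exact Or.inr (Or.inr ⟨h1.symm, A.symm _ _ h2, Ne.symm h3⟩)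

/-- The dual (linear negation) of a coherence space. -/
def dual {α : Type} (A : CohSpace α) : CohSpace α where
  coh a b := a = b ∨ ¬ A.coh a b
  refl a := Or.inl rfl
  symm := by
    rintro a b (rfl | h)
    · exact Or.inl rfl
    · exact Or.inr fun hc => h (A.symm _ _ hc)

/-- The multiplicative conjunction `A ⊗ B`. -/
def tensor {α β : Type} (A : CohSpace α) (B : CohSpace β) : CohSpace (α × β) where
  coh p q := A.coh p.1 q.1 ∧ B.coh p.2 q.2
  refl p := ⟨A.refl _, B.refl _⟩
  symm := fun p q h => ⟨A.symm _ _ h.1, B.symm _ _ h.2⟩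

/-- The multiplicative disjunction `A ⅋ B`. -/
def parr {α β : Type} (A : CohSpace α) (B : CohSpace β) : CohSpace (α × β) where
  coh p q := p = q ∨ A.scoh p.1 q.1 ∨ B.scoh p.2 q.2
  refl p := Or.inl rfl
  symm := by
    rintro p q (rfl | ⟨h1, h2⟩ | ⟨h1, h2⟩)
    · exact Or.inl rfl
    · exact Or.inr (Or.inl ⟨A.symm _ _ h1, Ne.symm h2⟩)
    · exact Or.inr (Or.inr ⟨B.symm _ _ h1, Ne.symm h2⟩)

/-- A linear morphism from `A` to `B`, given as a clique of `A ⊸ B`. -/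
def IsLinearMorphism {α β : Type} (A : CohSpace α) (B : CohSpace β) (f : Set (α × β)) : Prop :=
  ∀ p ∈ f, ∀ q ∈ f, (A.coh p.1 q.1 → B.coh p.2 q.2) ∧ (p.2 = q.2 → p.1 = q.1)

/-- The inverse relation. -/
def invRel {α β : Type} (f : Set (α × β)) : Set (β × α) := {q | (q.2, q.1) ∈ f}

/-- A linear isomorphism: a linear morphism which is a bijection between the webs and
whose inverse relation is also a linear morphism. -/
def IsLinearIso {α β : Type} (A : CohSpace α) (B : CohSpace β) (f : Set (α × β)) : Prop :=
  IsLinearMorphism A B f ∧ (∀ a, ∃! b, (a, b) ∈ f) ∧ (∀ b, ∃! a, (a, b) ∈ f) ∧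
    IsLinearMorphism B A (invRel f)

end CohSpace

open CohSpace in
/-- `◁` is self-dual: `(A ◁ B)⊥ = A⊥ ◁ B⊥` (same webs, and the
coherence relations coincide). -/
theorem before_self_dual {α β : Type} (A : CohSpace α) (B : CohSpace β) :
    ∀ p q : α × β, ((A.before B).dual).coh p q ↔ ((A.dual).before (B.dual)).coh p q := by
  rintro ⟨a, b⟩ ⟨a', b'⟩
  simp only [dual, before, scoh, Prod.mk.injEq, ne_eq]
  tauto
end

section
/- A finite irreflexive binary relation R on a set P is a dicograph (i.e., constructible from singletons by parallel composition, directed series composition, and symmetric series composition) if and only if: (1) the asymmetric part of R is N-free (a series-parallel order), (2) the symmetric part of R is P4-free (a cograph), and (3) R is weakly transitive: for all a,b,c, if (a,b) is in the asymmetric part of R and (b,c) ∈ R then (a,c) ∈ R, and if (a,b) ∈ R and (b,c) is in the asymmetric part of R then (a,c) ∈ R. -/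
/-- Terms denoting dicographs: built from single points by parallel composition `⅋`,
symmetric series composition `⊗` and directed series composition `◁`. -/
inductive DTerm (V : Type) : Type
  | leaf : V → DTerm V
  | par : DTerm V → DTerm V → DTerm V
  | tens : DTerm V → DTerm V → DTerm V
  | seq : DTerm V → DTerm V → DTerm V

namespace DTerm

/-- The list of points (leaves) of a term. -/
def leaves {V : Type} : DTerm V → List V
  | leaf v => [v]
  | par s t => leaves s ++ leaves t
  | tens s t => leaves s ++ leaves t
  | seq s t => leaves s ++ leaves t

/-- The irreflexive binary relation (dicograph) denoted by a term:
`⅋` is disjoint union, `⊗` adds all pairs in both directions between the two domains,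
`◁` adds all arcs from the first domain to the second. -/
def rel {V : Type} : DTerm V → V → V → Prop
  | leaf _ => fun _ _ => False
  | par s t => fun a b => rel s a b ∨ rel t a b
  | tens s t => fun a b =>
      rel s a b ∨ rel t a b ∨ (a ∈ leaves s ∧ b ∈ leaves t) ∨ (a ∈ leaves t ∧ b ∈ leaves s)
  | seq s t => fun a b => rel s a b ∨ rel t a b ∨ (a ∈ leaves s ∧ b ∈ leaves t)

end DTerm

/-- `R` is a dicograph with domain `E`: it is denoted by some term with pairwise
distinct leaves (i.e. it is constructible from singletons by the three compositions). -/
def IsDicograph {V : Type} (E : Set V) (R : V → V → Prop) : Prop :=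
  ∃ T : DTerm V, T.leaves.Nodup ∧ (∀ v, v ∈ T.leaves ↔ v ∈ E) ∧ (∀ a b, T.rel a b ↔ R a b)

/-- The asymmetric (arc) part of a relation. -/
def asymPart {V : Type} (R : V → V → Prop) (a b : V) : Prop := R a b ∧ ¬ R b a

/-- The symmetric (edge) part of a relation. -/
def symPart {V : Type} (R : V → V → Prop) (a b : V) : Prop := R a b ∧ R b a

/-- `S` is N-free: no induced sub-order isomorphic to the `N` poset
(`a < c`, `b < c`, `b < d`, and no other relation among the four points). -/
def NFree {V : Type} (S : V → V → Prop) : Prop :=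
  ¬ ∃ a b c d : V, a ≠ b ∧ a ≠ c ∧ a ≠ d ∧ b ≠ c ∧ b ≠ d ∧ c ≠ d ∧
      S a c ∧ S b c ∧ S b d ∧
      ¬ S a b ∧ ¬ S b a ∧ ¬ S a d ∧ ¬ S d a ∧ ¬ S c d ∧ ¬ S d c ∧
      ¬ S c a ∧ ¬ S c b ∧ ¬ S d b

/-- `S` is P4-free: no four vertices induce a path `a—b—c—d`. -/
def P4Free {V : Type} (S : V → V → Prop) : Prop :=
  ¬ ∃ a b c d : V, a ≠ b ∧ a ≠ c ∧ a ≠ d ∧ b ≠ c ∧ b ≠ d ∧ c ≠ d ∧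
      S a b ∧ S b c ∧ S c d ∧ ¬ S a c ∧ ¬ S a d ∧ ¬ S b d

/-- Weak transitivity: arcs compose with any relation on either side. -/
def WeaklyTransitive {V : Type} (R : V → V → Prop) : Prop :=
  ∀ a b c : V, (asymPart R a b → R b c → R a c) ∧ (R a b → asymPart R b c → R a c)

/-!
A composition of two relations on disjoint domains relates every pair across the two domains
in the same way, so an `N`, a `P4` or a violation of weak transitivity cannot have points on
both sides; hence every dicograph satisfies the three conditions.

Conversely, a relation satisfying them on at least two points *splits*: its domain is the union
of two disjoint nonempty parts such that all pairs across are unrelated, all are symmetric, or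
all are arcs from the first part to the second. Splitting recursively gives a term. Splits are
built by adding one point `v` at a time to a split set `s`, as in Seinsche's proof that
`P4`-free graphs are decomposable: either the split extends to `insert v s`, or `v` is related
to all of `s` in the same way and `{v}` splits off. Where the split fails to extend, an induced
`N` or `P4` appears. Where `v` is related to all of `s`, weak transitivity makes it relate in
the same way to two points `x`, `y` across the split, because neither of its relations to them
is of the kind (unrelated, symmetric or an arc) of the relation between `x` and `y`.
-/

variable {V : Type}

section Relations

variable {R : V → V → Prop} {a b c d v x y : V}

def Unrelated (R : V → V → Prop) (x y : V) : Prop := ¬R x y ∧ ¬R y x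

def SeesAlike (R : V → V → Prop) (v x y : V) : Prop := (R v x ↔ R v y) ∧ (R x v ↔ R y v)

theorem Unrelated.symm (h : Unrelated R x y) : Unrelated R y x := ⟨h.2, h.1⟩

theorem Unrelated.not_asymPart (h : Unrelated R x y) : ¬asymPart R x y := fun h' => h.1 h'.1

theorem symPart.symm (h : symPart R x y) : symPart R y x := ⟨h.2, h.1⟩

theorem asymPart.asymm (h : asymPart R x y) : ¬asymPart R y x := fun h' => h.2 h'.1

theorem P4Free.elim {G : V → V → Prop} (h : P4Free G) (hG : ∀ x y, G x y → G y x)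
    (hab : G a b) (hbc : G b c) (hcd : G c d) (hac : ¬G a c) (had : ¬G a d) (hbd : ¬G b d) :
    False :=
  h ⟨a, b, c, d, by rintro rfl; exact hac hbc, by rintro rfl; exact had hcd,
    by rintro rfl; exact hbd (hG _ _ hab), by rintro rfl; exact hac hab,
    by rintro rfl; exact had hab, by rintro rfl; exact hbd hbc, hab, hbc, hcd, hac, had, hbd⟩

theorem P4Free.compl {G : V → V → Prop} (h : P4Free G) (hG : ∀ x y, G x y → G y x) :
    P4Free fun x y => ¬G x y := by
  rintro ⟨a, b, c, d, -, -, -, -, -, -, hab, hbc, hcd, hac, had, hbd⟩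
  rw [not_not] at hac had hbd
  exact h.elim hG (hG _ _ hac) had (hG _ _ hbd) hcd (fun h => hbc (hG _ _ h)) hab

theorem NFree.elim_asymPart (h : NFree (asymPart R)) (hac : asymPart R a c)
    (hbc : asymPart R b c) (hbd : asymPart R b d) (hab : ¬asymPart R a b)
    (hba : ¬asymPart R b a) (had : ¬asymPart R a d) (hda : ¬asymPart R d a)
    (hcd : ¬asymPart R c d) (hdc : ¬asymPart R d c) : False :=
  h ⟨a, b, c, d, by rintro rfl; exact had hbd, by rintro rfl; exact hac.asymm hac,
    by rintro rfl; exact hba hbd, by rintro rfl; exact hbc.asymm hbc,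
    by rintro rfl; exact hdc hbc, by rintro rfl; exact had hac,
    hac, hbc, hbd, hab, hba, had, hda, hcd, hdc, hac.asymm, hbc.asymm, hbd.asymm⟩

namespace WeaklyTransitive

variable (hwt : WeaklyTransitive R)
include hwt

theorem asymPart_trans (hab : asymPart R a b) (hbc : asymPart R b c) : asymPart R a c :=
  ⟨(hwt a b c).1 hab hbc.1, fun hca => hbc.2 ((hwt c a b).2 hca hab)⟩

theorem symPart_of_not_rel (hab : R a b) (hbc : R b c) (hac : ¬R a c) :
    symPart R a b ∧ symPart R b c :=
  ⟨⟨hab, by_contra fun hba => hac ((hwt a b c).1 ⟨hab, hba⟩ hbc)⟩,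
    ⟨hbc, by_contra fun hcb => hac ((hwt a b c).2 hab ⟨hbc, hcb⟩)⟩⟩

theorem induced_p3_cases (hab : ¬Unrelated R a b) (hbc : ¬Unrelated R b c) (hac : Unrelated R a c) :
    (symPart R a b ∧ symPart R b c) ∨ (asymPart R a b ∧ asymPart R c b) ∨
      (asymPart R b a ∧ asymPart R b c) := by
  by_cases h₁ : R a b ∧ R b c
  · exact .inl (hwt.symPart_of_not_rel h₁.1 h₁.2 hac.1)
  by_cases h₂ : R c b ∧ R b a
  · obtain ⟨hcb, hba⟩ := hwt.symPart_of_not_rel h₂.1 h₂.2 hac.2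
    exact .inl ⟨hba.symm, hcb.symm⟩
  unfold Unrelated at hab hbc
  unfold asymPart
  tauto

theorem p4Free_not_unrelated (hnf : NFree (asymPart R)) (hpf : P4Free (symPart R)) :
    P4Free fun x y => ¬Unrelated R x y := by
  rintro ⟨a, b, c, d, -, -, -, -, -, -, hab, hbc, hcd, hac, had, hbd⟩
  rw [not_not] at hac had hbd
  rcases hwt.induced_p3_cases hab hbc hac with ⟨h₁, h₂⟩ | ⟨h₁, h₂⟩ | ⟨h₁, h₂⟩ <;>
    rcases hwt.induced_p3_cases hbc hcd hbd with ⟨h₃, h₄⟩ | ⟨h₃, h₄⟩ | ⟨h₃, h₄⟩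
  · exact hpf.elim (fun _ _ => symPart.symm) h₁ h₂ h₄ (fun h => hac.1 h.1) (fun h => had.1 h.1)
      (fun h => hbd.1 h.1)
  · exact h₃.2 h₂.2
  · exact h₃.2 h₂.1
  · exact h₂.2 h₃.1
  · exact h₂.asymm h₃
  · exact hnf.elim_asymPart h₁ h₂ h₄ hac.not_asymPart hac.symm.not_asymPart had.not_asymPart
      had.symm.not_asymPart hbd.not_asymPart hbd.symm.not_asymPart
  · exact h₂.2 h₃.2
  · exact hnf.elim_asymPart h₄ h₂ h₁ hbd.symm.not_asymPart hbd.not_asymPart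
      had.symm.not_asymPart had.not_asymPart hac.symm.not_asymPart hac.not_asymPart
  · exact h₂.asymm h₃

theorem seesAlike_of_unrelated (hxy : Unrelated R x y) (hx : ¬Unrelated R v x)
    (hy : ¬Unrelated R v y) : SeesAlike R v x y := by
  have key : ∀ {x y}, Unrelated R x y → ¬Unrelated R v y → (R v x → R v y) ∧ (R x v → R y v) := by
    intro x y hxy hy
    unfold Unrelated at hy
    refine ⟨fun hvx => by_contra fun hvy => ?_, fun hxv => by_contra fun hyv => ?_⟩
    · exact hvy (hwt.symPart_of_not_rel (by tauto) hvx hxy.2).1.2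
    · exact hyv (hwt.symPart_of_not_rel hxv (by tauto) hxy.1).2.2
  exact ⟨⟨(key hxy hy).1, (key hxy.symm hx).1⟩, ⟨(key hxy hy).2, (key hxy.symm hx).2⟩⟩

theorem seesAlike_of_symPart (hxy : symPart R x y) (hx : ¬symPart R v x)
    (hy : ¬symPart R v y) : SeesAlike R v x y := by
  have key : ∀ {x y}, symPart R x y → ¬symPart R v x → (R v x → R v y) ∧ (R x v → R y v) := by
    intro x y hxy hx
    refine ⟨fun hvx => by_contra fun hvy => ?_, fun hxv => by_contra fun hyv => ?_⟩
    · exact hx (hwt.symPart_of_not_rel hvx hxy.1 hvy).1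
    · exact hx (hwt.symPart_of_not_rel hxy.2 hxv hyv).2.symm
  exact ⟨⟨(key hxy hx).1, (key hxy.symm hy).1⟩, ⟨(key hxy hx).2, (key hxy.symm hy).2⟩⟩

theorem seesAlike_of_asymPart (hxy : asymPart R x y) (hx : ¬asymPart R v x ∧ ¬asymPart R x v)
    (hy : ¬asymPart R v y ∧ ¬asymPart R y v) : SeesAlike R v x y := by
  have hx' : R v x ↔ R x v := by unfold asymPart at hx; tauto
  have hy' : R v y ↔ R y v := by unfold asymPart at hy; tauto
  have hvxy : R v x ↔ R v y :=
    ⟨fun hvx => by_contra fun hvy => hxy.2 (hwt.symPart_of_not_rel hvx hxy.1 hvy).2.2,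
      fun hvy => by_contra fun hvx =>
        hxy.2 (hwt.symPart_of_not_rel hxy.1 (hy'.1 hvy) (mt hx'.2 hvx)).1.2⟩
  exact ⟨hvxy, hx'.symm.trans (hvxy.trans hy')⟩

end WeaklyTransitive

end Relations

namespace DTerm

theorem mem_leaves_of_rel {T : DTerm V} {a b : V} (h : T.rel a b) :
    a ∈ T.leaves ∧ b ∈ T.leaves := by
  induction T with
  | leaf => exact h.elim
  | par s t ihs iht | tens s t ihs iht | seq s t ihs iht =>
    simp only [rel, leaves, List.mem_append] at h ⊢
    aesop

end DTerm

structure IsComposition (R R₁ R₂ : V → V → Prop) (L₁ L₂ : Set V) (p q : Prop) : Prop where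
  disjoint : Disjoint L₁ L₂
  mem_of_rel_left {x y : V} : R₁ x y → x ∈ L₁ ∧ y ∈ L₁
  mem_of_rel_right {x y : V} : R₂ x y → x ∈ L₂ ∧ y ∈ L₂
  rel_iff (x y : V) : R x y ↔ R₁ x y ∨ R₂ x y ∨ (x ∈ L₁ ∧ y ∈ L₂ ∧ p) ∨ (x ∈ L₂ ∧ y ∈ L₁ ∧ q)

namespace IsComposition

variable {R R₁ R₂ : V → V → Prop} {L₁ L₂ : Set V} {p q : Prop}
  (hc : IsComposition R R₁ R₂ L₁ L₂ p q) {x y : V}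
include hc

theorem mem_of_rel (h : R x y) : (x ∈ L₁ ∨ x ∈ L₂) ∧ (y ∈ L₁ ∨ y ∈ L₂) := by
  rcases (hc.rel_iff x y).1 h with h | h | h | h
  · exact ⟨.inl (hc.mem_of_rel_left h).1, .inl (hc.mem_of_rel_left h).2⟩
  · exact ⟨.inr (hc.mem_of_rel_right h).1, .inr (hc.mem_of_rel_right h).2⟩
  · exact ⟨.inl h.1, .inr h.2.1⟩
  · exact ⟨.inr h.1, .inl h.2.1⟩

theorem rel_iff_left (hx : x ∈ L₁) (hy : y ∈ L₁) : R x y ↔ R₁ x y := by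
  have := Set.disjoint_left.1 hc.disjoint
  rw [hc.rel_iff]
  have := @hc.mem_of_rel_right x y
  tauto

theorem rel_iff_right (hx : x ∈ L₂) (hy : y ∈ L₂) : R x y ↔ R₂ x y := by
  have := Set.disjoint_left.1 hc.disjoint
  rw [hc.rel_iff]
  have := @hc.mem_of_rel_left x y
  tauto

theorem rel_iff_left_right (hx : x ∈ L₁) (hy : y ∈ L₂) : R x y ↔ p := by
  have := Set.disjoint_left.1 hc.disjoint
  rw [hc.rel_iff]
  have := @hc.mem_of_rel_left x y
  have := @hc.mem_of_rel_right x y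
  tauto

theorem rel_iff_right_left (hx : x ∈ L₂) (hy : y ∈ L₁) : R x y ↔ q := by
  have := Set.disjoint_left.1 hc.disjoint
  rw [hc.rel_iff]
  have := @hc.mem_of_rel_left x y
  have := @hc.mem_of_rel_right x y
  tauto

theorem weaklyTransitive (h₁ : WeaklyTransitive R₁) (h₂ : WeaklyTransitive R₂) :
    WeaklyTransitive R := by
  intro a b c
  constructor
  · intro hab hbc
    obtain ⟨ha, hb⟩ := hc.mem_of_rel hab.1
    obtain ⟨-, hc'⟩ := hc.mem_of_rel hbc
    rcases ha with ha | ha <;> rcases hb with hb | hb <;> rcases hc' with hc' | hc' <;>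
      simp only [asymPart, hc.rel_iff_left, hc.rel_iff_right, hc.rel_iff_left_right,
        hc.rel_iff_right_left, ha, hb, hc'] at hab hbc ⊢
    all_goals first | exact (h₁ a b c).1 hab hbc | exact (h₂ a b c).1 hab hbc | tauto
  · intro hab hbc
    obtain ⟨ha, hb⟩ := hc.mem_of_rel hab
    obtain ⟨-, hc'⟩ := hc.mem_of_rel hbc.1
    rcases ha with ha | ha <;> rcases hb with hb | hb <;> rcases hc' with hc' | hc' <;>
      simp only [asymPart, hc.rel_iff_left, hc.rel_iff_right, hc.rel_iff_left_right,
        hc.rel_iff_right_left, ha, hb, hc'] at hab hbc ⊢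
    all_goals first | exact (h₁ a b c).2 hab hbc | exact (h₂ a b c).2 hab hbc | tauto

theorem nfree_asymPart (h₁ : NFree (asymPart R₁)) (h₂ : NFree (asymPart R₂)) :
    NFree (asymPart R) := by
  rintro ⟨a, b, c, d, hab, hac, had, hbc, hbd, hcd,
    h1, h2, h3, h4, h5, h6, h7, h8, h9, h10, h11, h12⟩
  obtain ⟨ha, hc'⟩ := hc.mem_of_rel h1.1
  obtain ⟨hb, hd⟩ := hc.mem_of_rel h3.1
  rcases ha with ha | ha <;> rcases hb with hb | hb <;> rcases hc' with hc' | hc' <;>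
    rcases hd with hd | hd <;>
    simp only [asymPart, hc.rel_iff_left, hc.rel_iff_right, hc.rel_iff_left_right,
      hc.rel_iff_right_left, ha, hb, hc', hd] at h1 h2 h3 h4 h5 h6 h7 h8 h9 h10 h11 h12
  all_goals first
    | exact h₁ ⟨a, b, c, d, hab, hac, had, hbc, hbd, hcd,
        h1, h2, h3, h4, h5, h6, h7, h8, h9, h10, h11, h12⟩
    | exact h₂ ⟨a, b, c, d, hab, hac, had, hbc, hbd, hcd,
        h1, h2, h3, h4, h5, h6, h7, h8, h9, h10, h11, h12⟩
    | tauto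

theorem p4Free_symPart (h₁ : P4Free (symPart R₁)) (h₂ : P4Free (symPart R₂)) :
    P4Free (symPart R) := by
  rintro ⟨a, b, c, d, hab, hac, had, hbc, hbd, hcd, h1, h2, h3, h4, h5, h6⟩
  obtain ⟨ha, hb⟩ := hc.mem_of_rel h1.1
  obtain ⟨hc', hd⟩ := hc.mem_of_rel h3.1
  rcases ha with ha | ha <;> rcases hb with hb | hb <;> rcases hc' with hc' | hc' <;>
    rcases hd with hd | hd <;>
    simp only [symPart, hc.rel_iff_left, hc.rel_iff_right, hc.rel_iff_left_right,
      hc.rel_iff_right_left, ha, hb, hc', hd] at h1 h2 h3 h4 h5 h6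
  all_goals first
    | exact h₁ ⟨a, b, c, d, hab, hac, had, hbc, hbd, hcd, h1, h2, h3, h4, h5, h6⟩
    | exact h₂ ⟨a, b, c, d, hab, hac, had, hbc, hbd, hcd, h1, h2, h3, h4, h5, h6⟩
    | tauto

theorem dicograph_conditions
    (h₁ : NFree (asymPart R₁) ∧ P4Free (symPart R₁) ∧ WeaklyTransitive R₁)
    (h₂ : NFree (asymPart R₂) ∧ P4Free (symPart R₂) ∧ WeaklyTransitive R₂) :
    NFree (asymPart R) ∧ P4Free (symPart R) ∧ WeaklyTransitive R :=
  ⟨hc.nfree_asymPart h₁.1 h₂.1, hc.p4Free_symPart h₁.2.1 h₂.2.1,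
    hc.weaklyTransitive h₁.2.2 h₂.2.2⟩

end IsComposition

namespace DTerm

variable {s t : DTerm V}

theorem isComposition_par (h : ∀ x ∈ s.leaves, x ∉ t.leaves) :
    IsComposition (par s t).rel s.rel t.rel {x | x ∈ s.leaves} {x | x ∈ t.leaves} False False where
  disjoint := Set.disjoint_left.2 h
  mem_of_rel_left := mem_leaves_of_rel
  mem_of_rel_right := mem_leaves_of_rel
  rel_iff x y := by simp [rel]

theorem isComposition_tens (h : ∀ x ∈ s.leaves, x ∉ t.leaves) :
    IsComposition (tens s t).rel s.rel t.rel {x | x ∈ s.leaves} {x | x ∈ t.leaves} True True where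
  disjoint := Set.disjoint_left.2 h
  mem_of_rel_left := mem_leaves_of_rel
  mem_of_rel_right := mem_leaves_of_rel
  rel_iff x y := by simp [rel]

theorem isComposition_seq (h : ∀ x ∈ s.leaves, x ∉ t.leaves) :
    IsComposition (seq s t).rel s.rel t.rel {x | x ∈ s.leaves} {x | x ∈ t.leaves} True False where
  disjoint := Set.disjoint_left.2 h
  mem_of_rel_left := mem_leaves_of_rel
  mem_of_rel_right := mem_leaves_of_rel
  rel_iff x y := by simp [rel]

theorem dicograph_conditions {T : DTerm V} (hT : T.leaves.Nodup) :
    NFree (asymPart T.rel) ∧ P4Free (symPart T.rel) ∧ WeaklyTransitive T.rel := by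
  induction T with
  | leaf => simp [NFree, P4Free, WeaklyTransitive, asymPart, symPart, rel]
  | par s t ihs iht =>
    obtain ⟨hs, ht, hst⟩ := List.nodup_append.1 hT
    exact (isComposition_par fun x hx hx' => hst x hx x hx' rfl).dicograph_conditions
      (ihs hs) (iht ht)
  | tens s t ihs iht =>
    obtain ⟨hs, ht, hst⟩ := List.nodup_append.1 hT
    exact (isComposition_tens fun x hx hx' => hst x hx x hx' rfl).dicograph_conditions
      (ihs hs) (iht ht)
  | seq s t ihs iht =>
    obtain ⟨hs, ht, hst⟩ := List.nodup_append.1 hT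
    exact (isComposition_seq fun x hx hx' => hst x hx x hx' rfl).dicograph_conditions
      (ihs hs) (iht ht)

end DTerm

section Splits

variable [DecidableEq V] {P : V → V → Prop} {R : V → V → Prop} {s X : Finset V} {v w : V}

structure IsSplit (P : V → V → Prop) (s X : Finset V) : Prop where
  nonempty : X.Nonempty
  ssubset : X ⊂ s
  cross : ∀ x ∈ X, ∀ y ∈ s \ X, P x y

def HasSplit (R : V → V → Prop) (s : Finset V) : Prop :=
  ∃ X, IsSplit (Unrelated R) s X ∨ IsSplit (symPart R) s X ∨ IsSplit (asymPart R) s X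

theorem isSplit_singleton (hv : v ∉ s) (hs : s.Nonempty) (h : ∀ y ∈ s, P v y) :
    IsSplit P (insert v s) {v} := by
  refine ⟨Finset.singleton_nonempty v, ?_, fun x hx y hy => ?_⟩
  · obtain ⟨w, hw⟩ := hs
    rw [Finset.ssubset_iff_of_subset (by simp)]
    exact ⟨w, Finset.mem_insert_of_mem hw, by rintro h; exact hv (Finset.mem_singleton.1 h ▸ hw)⟩
  · rw [Finset.mem_singleton.1 hx]
    rw [Finset.insert_sdiff_of_mem _ (Finset.mem_singleton_self v), Finset.mem_sdiff] at hy
    exact h y hy.1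

theorem isSplit_of_forall (hv : v ∉ s) (hs : s.Nonempty) (h : ∀ x ∈ s, P x v) :
    IsSplit P (insert v s) s := by
  refine ⟨hs, Finset.ssubset_insert hv, fun x hx y hy => ?_⟩
  rw [Finset.insert_sdiff_of_notMem _ hv, Finset.sdiff_self, Finset.mem_insert] at hy
  rcases hy with rfl | hy
  exacts [h x hx, absurd hy (Finset.notMem_empty y)]

theorem hasSplit_insert_of_forall_seesAlike (hv : v ∉ s) (hw : w ∈ s)
    (h : ∀ x ∈ s, SeesAlike R v x w) : HasSplit R (insert v s) := by
  have hs : s.Nonempty := ⟨w, hw⟩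
  by_cases h₁ : R v w <;> by_cases h₂ : R w v
  · exact ⟨{v}, .inr (.inl (isSplit_singleton hv hs fun y hy =>
      ⟨(h y hy).1.2 h₁, (h y hy).2.2 h₂⟩))⟩
  · exact ⟨{v}, .inr (.inr (isSplit_singleton hv hs fun y hy =>
      ⟨(h y hy).1.2 h₁, mt (h y hy).2.1 h₂⟩))⟩
  · exact ⟨s, .inr (.inr (isSplit_of_forall hv hs fun x hx =>
      ⟨(h x hx).2.2 h₂, mt (h x hx).1.1 h₁⟩))⟩
  · exact ⟨{v}, .inl (isSplit_singleton hv hs fun y hy =>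
      ⟨mt (h y hy).1.1 h₁, mt (h y hy).2.1 h₂⟩)⟩

namespace IsSplit

theorem sdiff_nonempty (hX : IsSplit P s X) : (s \ X).Nonempty :=
  Finset.sdiff_nonempty.2 fun h => hX.ssubset.2 h

theorem insert_of_forall (hX : IsSplit P s X) (h : ∀ x ∈ X, P x v) :
    IsSplit P (insert v s) X := by
  refine ⟨hX.nonempty, hX.ssubset.trans_subset (Finset.subset_insert v s), fun x hx y hy => ?_⟩
  rw [Finset.mem_sdiff, Finset.mem_insert] at hy
  obtain ⟨rfl | hys, hyX⟩ := hy
  exacts [h x hx, hX.cross x hx y (Finset.mem_sdiff.2 ⟨hys, hyX⟩)]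

theorem insert_insert (hX : IsSplit P s X) (hv : v ∉ s) (h : ∀ y ∈ s \ X, P v y) :
    IsSplit P (insert v s) (insert v X) := by
  refine ⟨Finset.insert_nonempty v X, ?_, fun x hx y hy => ?_⟩
  · rw [Finset.ssubset_iff_of_subset (Finset.insert_subset_insert v hX.ssubset.subset)]
    obtain ⟨y, hy⟩ := hX.sdiff_nonempty
    rw [Finset.mem_sdiff] at hy
    refine ⟨y, Finset.mem_insert_of_mem hy.1, ?_⟩
    rw [Finset.mem_insert]
    rintro (rfl | hyX)
    exacts [hv hy.1, hy.2 hyX]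
  · rw [Finset.insert_sdiff_insert, Finset.mem_sdiff] at hy
    rw [Finset.mem_insert] at hx
    have hy' : y ∈ s \ X := Finset.mem_sdiff.2 ⟨hy.1, fun h => hy.2 (Finset.mem_insert_of_mem h)⟩
    rcases hx with rfl | hx
    exacts [h y hy', hX.cross x hx y hy']

theorem iff_of_cross {Q : V → Prop} (hX : IsSplit P s X)
    (hQ : ∀ x ∈ X, ∀ y ∈ s \ X, Q x ↔ Q y) {a b : V} (ha : a ∈ s) (hb : b ∈ s) : Q a ↔ Q b := by
  obtain ⟨x₀, hx₀⟩ := hX.nonempty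
  obtain ⟨y₀, hy₀⟩ := hX.sdiff_nonempty
  have h : ∀ a ∈ s, Q a ↔ Q x₀ := by
    intro a ha
    by_cases haX : a ∈ X
    · exact (hQ a haX y₀ hy₀).trans (hQ x₀ hx₀ y₀ hy₀).symm
    · exact (hQ x₀ hx₀ a (Finset.mem_sdiff.2 ⟨ha, haX⟩)).symm
  exact (h a ha).trans (h b hb).symm

theorem seesAlike (hX : IsSplit P s X) (h : ∀ x ∈ X, ∀ y ∈ s \ X, SeesAlike R v x y)
    {a b : V} (ha : a ∈ s) (hb : b ∈ s) : SeesAlike R v a b :=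
  ⟨hX.iff_of_cross (Q := (R v ·)) (fun x hx y hy => (h x hx y hy).1) ha hb,
    hX.iff_of_cross (Q := (R · v)) (fun x hx y hy => (h x hx y hy).2) ha hb⟩

theorem insert_or_forall_not (hP : ∀ x y, P x y → P y x) (hG : P4Free fun x y => ¬P x y)
    (hv : v ∉ s) (hX : IsSplit P s X) : (∃ Z, IsSplit P (insert v s) Z) ∨ ∀ w ∈ s, ¬P v w := by
  classical
  by_cases hXv : ∀ x ∈ X, P x v
  · exact .inl ⟨X, hX.insert_of_forall hXv⟩
  by_cases hYv : ∀ y ∈ s \ X, P v y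
  · exact .inl ⟨insert v X, hX.insert_insert hv hYv⟩
  by_cases hvs : ∀ w ∈ s, ¬P v w
  · exact .inr hvs
  by_cases hD : ∀ d ∈ s.filter (P v ·), ∀ n ∈ insert v s \ s.filter (P v ·), P d n
  · refine .inl ⟨s.filter (P v ·), ⟨?_, ?_, hD⟩⟩
    · push Not at hvs
      obtain ⟨w, hw, hvw⟩ := hvs
      exact ⟨w, Finset.mem_filter.2 ⟨hw, hvw⟩⟩
    · exact (Finset.filter_subset _ s).trans_ssubset (Finset.ssubset_insert hv)
  push Not at hXv hYv hD
  exfalso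
  obtain ⟨x, hx, hxv⟩ := hXv
  obtain ⟨y, hy, hvy⟩ := hYv
  obtain ⟨d, hd, n, hn, hdn⟩ := hD
  rw [Finset.mem_filter] at hd
  rw [Finset.mem_sdiff, Finset.mem_insert, Finset.mem_filter] at hn
  obtain ⟨rfl | hns, hvn⟩ := hn
  · exact hdn (hP _ _ hd.2)
  replace hvn : ¬P v n := fun h => hvn ⟨hns, h⟩
  -- `d` lies on the side of `n`; taking `n'` on the other side with `¬P v n'`, the points
  -- `d, n, v, n'` induce a path of `¬P`
  obtain ⟨n', hvn', hnn', hdn'⟩ : ∃ n', ¬P v n' ∧ P n n' ∧ P d n' := by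
    by_cases hnX : n ∈ X
    · have hdX : d ∈ X := by_contra fun hdX =>
        hdn (hP _ _ (hX.cross n hnX d (Finset.mem_sdiff.2 ⟨hd.1, hdX⟩)))
      exact ⟨y, hvy, hX.cross n hnX y hy, hX.cross d hdX y hy⟩
    · have hdX : d ∉ X := fun hdX => hdn (hX.cross d hdX n (Finset.mem_sdiff.2 ⟨hns, hnX⟩))
      exact ⟨x, fun h => hxv (hP _ _ h), hP _ _ (hX.cross x hx n (Finset.mem_sdiff.2 ⟨hns, hnX⟩)),
        hP _ _ (hX.cross x hx d (Finset.mem_sdiff.2 ⟨hd.1, hdX⟩))⟩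
  exact hG.elim (fun a b h h' => h (hP _ _ h')) hdn (fun h => hvn (hP _ _ h)) hvn'
    (not_not.2 (hP _ _ hd.2)) (not_not.2 hdn') (not_not.2 hnn')

theorem hasSplit_insert_of_seesAlike (hX : IsSplit P s X) (hv : v ∉ s)
    (h : ∀ x ∈ X, ∀ y ∈ s \ X, SeesAlike R v x y) : HasSplit R (insert v s) := by
  obtain ⟨w, hw⟩ := hX.nonempty
  have hws := hX.ssubset.subset hw
  exact hasSplit_insert_of_forall_seesAlike hv hws fun x hx => hX.seesAlike h hx hws

end IsSplit

variable (hwt : WeaklyTransitive R) (hnf : NFree (asymPart R)) (hpf : P4Free (symPart R))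
include hwt

include hnf hpf in
theorem hasSplit_insert_of_isSplit_unrelated (hv : v ∉ s) (hX : IsSplit (Unrelated R) s X) :
    HasSplit R (insert v s) := by
  rcases hX.insert_or_forall_not (fun _ _ h => h.symm) (hwt.p4Free_not_unrelated hnf hpf) hv with
    ⟨Z, hZ⟩ | hvs
  · exact ⟨Z, .inl hZ⟩
  exact hX.hasSplit_insert_of_seesAlike hv fun x hx y hy =>
    hwt.seesAlike_of_unrelated (hX.cross x hx y hy) (hvs x (hX.ssubset.subset hx))
      (hvs y (Finset.sdiff_subset hy))

include hpf in
theorem hasSplit_insert_of_isSplit_symPart (hv : v ∉ s) (hX : IsSplit (symPart R) s X) :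
    HasSplit R (insert v s) := by
  rcases hX.insert_or_forall_not (fun _ _ h => h.symm) (hpf.compl fun _ _ h => h.symm) hv with
    ⟨Z, hZ⟩ | hvs
  · exact ⟨Z, .inr (.inl hZ)⟩
  exact hX.hasSplit_insert_of_seesAlike hv fun x hx y hy =>
    hwt.seesAlike_of_symPart (hX.cross x hx y hy) (hvs x (hX.ssubset.subset hx))
      (hvs y (Finset.sdiff_subset hy))

include hnf in
theorem hasSplit_insert_of_isSplit_asymPart (hv : v ∉ s) (hX : IsSplit (asymPart R) s X) :
    HasSplit R (insert v s) := by
  classical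
  by_cases hXv : ∀ x ∈ X, asymPart R x v
  · exact ⟨X, .inr (.inr (hX.insert_of_forall hXv))⟩
  by_cases hYv : ∀ y ∈ s \ X, asymPart R v y
  · exact ⟨insert v X, .inr (.inr (hX.insert_insert hv hYv))⟩
  push Not at hXv hYv
  obtain ⟨x₀, hx₀, hx₀v⟩ := hXv
  obtain ⟨y₀, hy₀, hvy₀⟩ := hYv
  have hvx₀ : ¬asymPart R v x₀ := fun h => hvy₀ (hwt.asymPart_trans h (hX.cross x₀ hx₀ y₀ hy₀))
  have hy₀v : ¬asymPart R y₀ v := fun h => hx₀v (hwt.asymPart_trans (hX.cross x₀ hx₀ y₀ hy₀) h)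
  have hmem : ∀ {z}, z ∈ s → z ∉ X → z ∈ s \ X := fun hz hzX => Finset.mem_sdiff.2 ⟨hz, hzX⟩
  -- The points below `v` lie below all others, since a point `z` incomparable to `v` and to
  -- some `l < v` would form the `N` `z < y₀ > l < v`; dually for the points above `v`.
  by_cases hL : ∃ l ∈ s, asymPart R l v
  · obtain ⟨l, hl, hlv⟩ := hL
    refine ⟨s.filter (asymPart R · v), .inr (.inr ⟨⟨l, Finset.mem_filter.2 ⟨hl, hlv⟩⟩,
      (Finset.filter_subset _ s).trans_ssubset (Finset.ssubset_insert hv), fun l hl z hz => ?_⟩)⟩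
    rw [Finset.mem_filter] at hl
    rw [Finset.mem_sdiff, Finset.mem_insert, Finset.mem_filter] at hz
    have hlX : l ∈ X := by_contra fun hlX =>
      hx₀v (hwt.asymPart_trans (hX.cross x₀ hx₀ l (hmem hl.1 hlX)) hl.2)
    obtain ⟨rfl | hzs, hzv⟩ := hz
    · exact hl.2
    replace hzv : ¬asymPart R z v := fun h => hzv ⟨hzs, h⟩
    by_cases hzX : z ∈ X
    · have hvz : ¬asymPart R v z := fun h => hvy₀ (hwt.asymPart_trans h (hX.cross z hzX y₀ hy₀))
      exact by_contra fun hlz => hnf.elim_asymPart (hX.cross z hzX y₀ hy₀) (hX.cross l hlX y₀ hy₀)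
        hl.2 (fun h => hzv (hwt.asymPart_trans h hl.2)) hlz hzv hvz hy₀v hvy₀
    · exact hX.cross l hlX z (hmem hzs hzX)
  push Not at hL
  by_cases hU : ∃ u ∈ s, asymPart R v u
  · obtain ⟨u, hu, hvu⟩ := hU
    refine ⟨(insert v s).filter (¬asymPart R v ·), .inr (.inr ⟨⟨v, Finset.mem_filter.2
      ⟨Finset.mem_insert_self v s, fun h => h.2 h.1⟩⟩, Finset.filter_ssubset.2
      ⟨u, Finset.mem_insert_of_mem hu, not_not.2 hvu⟩, fun z hz u hu => ?_⟩)⟩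
    rw [Finset.mem_filter] at hz
    rw [Finset.mem_sdiff, Finset.mem_filter, not_and, not_not] at hu
    have hvu := hu.2 hu.1
    obtain rfl | hus := Finset.mem_insert.1 hu.1
    · exact absurd hvu (fun h => h.2 h.1)
    have huX : u ∉ X := fun huX => hvy₀ (hwt.asymPart_trans hvu (hX.cross u huX y₀ hy₀))
    obtain ⟨rfl | hzs, hvz⟩ := And.imp_left Finset.mem_insert.1 hz
    · exact hvu
    by_cases hzX : z ∈ X
    · exact hX.cross z hzX u (hmem hus huX)
    · exact by_contra fun hzu => hnf.elim_asymPart hvu (hX.cross x₀ hx₀ u (hmem hus huX))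
        (hX.cross x₀ hx₀ z (hmem hzs hzX)) hvx₀ hx₀v hvz (hL z hzs)
        (fun h => hvz (hwt.asymPart_trans hvu h)) hzu
  push Not at hU
  exact hX.hasSplit_insert_of_seesAlike hv fun x hx y hy =>
    hwt.seesAlike_of_asymPart (hX.cross x hx y hy)
      ⟨hU x (hX.ssubset.subset hx), hL x (hX.ssubset.subset hx)⟩
      ⟨hU y (Finset.sdiff_subset hy), hL y (Finset.sdiff_subset hy)⟩

include hnf hpf in
theorem hasSplit (s : Finset V) (hs : 1 < s.card) : HasSplit R s := by
  induction s using Finset.induction_on with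
  | empty => simp at hs
  | insert v s hv ih =>
    rw [Finset.card_insert_of_notMem hv] at hs
    by_cases hs' : 1 < s.card
    · obtain ⟨X, hX | hX | hX⟩ := ih hs'
      · exact hasSplit_insert_of_isSplit_unrelated hwt hnf hpf hv hX
      · exact hasSplit_insert_of_isSplit_symPart hwt hpf hv hX
      · exact hasSplit_insert_of_isSplit_asymPart hwt hnf hv hX
    · obtain ⟨w, rfl⟩ := Finset.card_eq_one.1 (show s.card = 1 by omega)
      exact hasSplit_insert_of_forall_seesAlike hv (Finset.mem_singleton_self w) fun x hx => by
        rw [Finset.mem_singleton.1 hx]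
        exact ⟨Iff.rfl, Iff.rfl⟩

end Splits

section Representation

variable {R : V → V → Prop}

structure Represents (T : DTerm V) (R : V → V → Prop) (s : Finset V) : Prop where
  nodup : T.leaves.Nodup
  mem_leaves (x : V) : x ∈ T.leaves ↔ x ∈ s
  rel_iff (a b : V) : T.rel a b ↔ R a b ∧ a ∈ s ∧ b ∈ s

namespace Represents

theorem leaf (hirr : ∀ a, ¬R a a) (v : V) : Represents (DTerm.leaf v) R {v} where
  nodup := List.nodup_singleton v
  mem_leaves x := by simp [DTerm.leaves]
  rel_iff a b := by
    simp only [DTerm.rel, Finset.mem_singleton, false_iff, not_and]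
    rintro h rfl rfl
    exact hirr _ h

variable [DecidableEq V] {T₁ T₂ T : DTerm V} {X Y : Finset V}

theorem of_isComposition {p q : Prop} (h₁ : Represents T₁ R X) (h₂ : Represents T₂ R Y)
    (hXY : Disjoint X Y) (hleaves : T.leaves = T₁.leaves ++ T₂.leaves)
    (hc : IsComposition T.rel T₁.rel T₂.rel {x | x ∈ T₁.leaves} {x | x ∈ T₂.leaves} p q)
    (hcross : ∀ x ∈ X, ∀ y ∈ Y, (R x y ↔ p) ∧ (R y x ↔ q)) : Represents T R (X ∪ Y) where
  nodup := hleaves ▸ List.nodup_append.2 ⟨h₁.nodup, h₂.nodup, fun a ha b hb hab =>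
    Finset.disjoint_left.1 hXY ((h₁.mem_leaves a).1 ha) ((h₂.mem_leaves a).1 (hab ▸ hb))⟩
  mem_leaves x := by rw [hleaves, List.mem_append, h₁.mem_leaves, h₂.mem_leaves, Finset.mem_union]
  rel_iff a b := by
    have : a ∈ X → a ∉ Y := fun h => Finset.disjoint_left.1 hXY h
    have : b ∈ X → b ∉ Y := fun h => Finset.disjoint_left.1 hXY h
    have := hcross a
    have := hcross b
    simp only [hc.rel_iff, Set.mem_ofPred_eq, h₁.mem_leaves, h₂.mem_leaves, h₁.rel_iff,
      h₂.rel_iff, Finset.mem_union]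
    grind

theorem par (h₁ : Represents T₁ R X) (h₂ : Represents T₂ R Y) (hXY : Disjoint X Y)
    (h : ∀ x ∈ X, ∀ y ∈ Y, Unrelated R x y) : Represents (T₁.par T₂) R (X ∪ Y) :=
  h₁.of_isComposition h₂ hXY rfl (DTerm.isComposition_par fun x hx₁ hx₂ =>
      Finset.disjoint_left.1 hXY ((h₁.mem_leaves x).1 hx₁) ((h₂.mem_leaves x).1 hx₂))
    fun x hx y hy => ⟨iff_false_intro (h x hx y hy).1, iff_false_intro (h x hx y hy).2⟩

theorem tens (h₁ : Represents T₁ R X) (h₂ : Represents T₂ R Y) (hXY : Disjoint X Y)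
    (h : ∀ x ∈ X, ∀ y ∈ Y, symPart R x y) : Represents (T₁.tens T₂) R (X ∪ Y) :=
  h₁.of_isComposition h₂ hXY rfl (DTerm.isComposition_tens fun x hx₁ hx₂ =>
      Finset.disjoint_left.1 hXY ((h₁.mem_leaves x).1 hx₁) ((h₂.mem_leaves x).1 hx₂))
    fun x hx y hy => ⟨iff_true_intro (h x hx y hy).1, iff_true_intro (h x hx y hy).2⟩

theorem seq (h₁ : Represents T₁ R X) (h₂ : Represents T₂ R Y) (hXY : Disjoint X Y)
    (h : ∀ x ∈ X, ∀ y ∈ Y, asymPart R x y) : Represents (T₁.seq T₂) R (X ∪ Y) :=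
  h₁.of_isComposition h₂ hXY rfl (DTerm.isComposition_seq fun x hx₁ hx₂ =>
      Finset.disjoint_left.1 hXY ((h₁.mem_leaves x).1 hx₁) ((h₂.mem_leaves x).1 hx₂))
    fun x hx y hy => ⟨iff_true_intro (h x hx y hy).1, iff_false_intro (h x hx y hy).2⟩

end Represents

theorem exists_represents [DecidableEq V] (hirr : ∀ a, ¬R a a) (hwt : WeaklyTransitive R)
    (hnf : NFree (asymPart R)) (hpf : P4Free (symPart R)) (s : Finset V) (hs : s.Nonempty) :
    ∃ T : DTerm V, Represents T R s := by
  induction s using Finset.strongInduction with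
  | H s ih =>
  obtain ⟨v, rfl⟩ | hs := hs.exists_eq_singleton_or_nontrivial
  · exact ⟨.leaf v, .leaf hirr v⟩
  obtain ⟨X, hX⟩ := hasSplit hwt hnf hpf s (Finset.one_lt_card_iff_nontrivial.2 hs)
  obtain ⟨hXne, hXs⟩ : X.Nonempty ∧ X ⊂ s := by
    rcases hX with hX | hX | hX <;> exact ⟨hX.nonempty, hX.ssubset⟩
  obtain ⟨T₁, h₁⟩ := ih X hXs hXne
  obtain ⟨T₂, h₂⟩ := ih (s \ X) (Finset.sdiff_ssubset hXs.subset hXne)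
    (Finset.sdiff_nonempty.2 hXs.2)
  rw [← Finset.union_sdiff_of_subset hXs.subset]
  rcases hX with hX | hX | hX
  · exact ⟨_, h₁.par h₂ Finset.disjoint_sdiff hX.cross⟩
  · exact ⟨_, h₁.tens h₂ Finset.disjoint_sdiff hX.cross⟩
  · exact ⟨_, h₁.seq h₂ Finset.disjoint_sdiff hX.cross⟩

end Representation

/-- a finite irreflexive relation is a dicograph iff its asymmetric part is
N-free, its symmetric part is P4-free, and it is weakly transitive. -/
theorem dicograph_characterisation {V : Type} (E : Set V) (R : V → V → Prop)
    (hfin : E.Finite) (hne : E.Nonempty)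
    (hirr : ∀ a, ¬ R a a) (hsupp : ∀ a b, R a b → a ∈ E ∧ b ∈ E) :
    IsDicograph E R ↔
      NFree (asymPart R) ∧ P4Free (symPart R) ∧ WeaklyTransitive R := by
  classical
  constructor
  · rintro ⟨T, hT, -, hTR⟩
    obtain rfl : T.rel = R := funext₂ fun a b => propext (hTR a b)
    exact T.dicograph_conditions hT
  · rintro ⟨hnf, hpf, hwt⟩
    obtain ⟨T, hT⟩ := exists_represents hirr hwt hnf hpf hfin.toFinset (by simpa using hne)
    refine ⟨T, hT.nodup, fun x => by rw [hT.mem_leaves, Set.Finite.mem_toFinset], fun a b => ?_⟩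
    rw [hT.rel_iff, Set.Finite.mem_toFinset, Set.Finite.mem_toFinset]
    exact ⟨fun h => h.1, fun h => ⟨h, hsupp a b h⟩⟩
end

section
/- The largest cograph of atoms derivable in MLL is AX_n: if an MLL sequent ⊢ Γ with 2n atoms is derivable, then the cograph of Γ (obtained by unfolding all formulas, interpreting ⅋ as disjoint union and ⊗ as join on atom occurrences) is included, as a relation on the atom occurrences paired by axioms, in the cograph of ⊗_{1≤i≤n}(a_i ⅋ a_i⊥); in particular the two occurrences of atoms introduced by a common axiom rule are never adjacent in the cograph of Γ. -/
/-- A literal occurrence: a polarity and an occurrence identifier; the two literal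
occurrences issued from a common axiom share the identifier with opposite polarities. -/
abbrev Lit : Type := Bool × ℕ

/-- MLL formulas over literal occurrences. -/
inductive OForm : Type
  | atom : Lit → OForm
  | tens : OForm → OForm → OForm
  | par : OForm → OForm → OForm

namespace OForm

/-- The literal occurrences of a formula. -/
def lits : OForm → List Lit
  | atom l => [l]
  | tens s t => lits s ++ lits t
  | par s t => lits s ++ lits t

/-- The cograph of a formula on its literal occurrences: `⅋` is disjoint union,
`⊗` is join. -/
def cog : OForm → Lit → Lit → Prop
  | atom _ => fun _ _ => False
  | par s t => fun a b => cog s a b ∨ cog t a b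
  | tens s t => fun a b =>
      cog s a b ∨ cog t a b ∨ (a ∈ lits s ∧ b ∈ lits t) ∨ (a ∈ lits t ∧ b ∈ lits s)

end OForm

/-- The occurrence identifiers used in a sequent. -/
def idsSeq (Γ : Multiset OForm) : Multiset ℕ :=
  Γ.bind fun A => ((A.lits.map Prod.snd : List ℕ) : Multiset ℕ)

/-- The cograph of a sequent: disjoint union of the cographs of its formulas. -/
def cogSeq (Γ : Multiset OForm) (a b : Lit) : Prop := ∃ A ∈ Γ, A.cog a b

/-- Occurrence-labelled MLL: the axiom introduces a fresh dual pair of literal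
occurrences sharing an identifier, and the tensor rule requires the identifiers of the
two premises to be disjoint, so each identifier is used by exactly one axiom. -/
inductive MLLo : Multiset OForm → Prop
  | ax (i : ℕ) : MLLo {OForm.atom (true, i), OForm.atom (false, i)}
  | parR (Γ : Multiset OForm) (A B : OForm) :
      MLLo (A ::ₘ B ::ₘ Γ) → MLLo (OForm.par A B ::ₘ Γ)
  | tensR (Γ Δ : Multiset OForm) (A B : OForm) :
      MLLo (A ::ₘ Γ) → MLLo (B ::ₘ Δ) →
      Disjoint (idsSeq (A ::ₘ Γ)) (idsSeq (B ::ₘ Δ)) →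
      MLLo (OForm.tens A B ::ₘ (Γ + Δ))

lemma mem_lits_of_cog : ∀ (A : OForm) (a b : Lit), A.cog a b → a ∈ A.lits ∧ b ∈ A.lits := by
  intro A
  induction A with
  | atom l => intro a b h; exact h.elim
  | tens s t hs ht =>
    intro a b h
    rcases h with h | h | ⟨h1, h2⟩ | ⟨h1, h2⟩
    · exact ⟨List.mem_append_left _ (hs a b h).1, List.mem_append_left _ (hs a b h).2⟩
    · exact ⟨List.mem_append_right _ (ht a b h).1, List.mem_append_right _ (ht a b h).2⟩
    · exact ⟨List.mem_append_left _ h1, List.mem_append_right _ h2⟩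
    · exact ⟨List.mem_append_right _ h1, List.mem_append_left _ h2⟩
  | par s t hs ht =>
    intro a b h
    rcases h with h | h
    · exact ⟨List.mem_append_left _ (hs a b h).1, List.mem_append_left _ (hs a b h).2⟩
    · exact ⟨List.mem_append_right _ (ht a b h).1, List.mem_append_right _ (ht a b h).2⟩

lemma snd_mem_idsSeq {Γ : Multiset OForm} {C : OForm} {a : Lit}
    (hC : C ∈ Γ) (ha : a ∈ C.lits) : a.2 ∈ idsSeq Γ := by
  rw [idsSeq, Multiset.mem_bind]
  exact ⟨C, hC, Multiset.mem_coe.2 (List.mem_map.2 ⟨a, ha, rfl⟩)⟩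

/-- for a derivable MLL sequent, the cograph of the sequent is included in
the cograph of `AX_n` (the complete graph on the `2n` literal occurrences minus the
axiom pairs): every edge joins two distinct occurrences of the sequent, and never joins
the two dual occurrences issued from a common axiom. -/
theorem cograph_included_in_AX (Γ : Multiset OForm) (h : MLLo Γ) :
    ∀ a b : Lit, cogSeq Γ a b →
      (∃ A ∈ Γ, a ∈ A.lits) ∧ (∃ A ∈ Γ, b ∈ A.lits) ∧ a ≠ b ∧
        ¬ (a.2 = b.2 ∧ a.1 ≠ b.1) := by
  induction h with
  | ax i =>
    rintro a b ⟨C, hC, hcog⟩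
    simp only [Multiset.insert_eq_cons, Multiset.mem_cons, Multiset.mem_singleton] at hC
    rcases hC with rfl | rfl <;> exact hcog.elim
  | parR Γ A B _ ih =>
    rintro a b ⟨C, hC, hcog⟩
    have key : cogSeq (A ::ₘ B ::ₘ Γ) a b := by
      rcases Multiset.mem_cons.1 hC with rfl | hC
      · rcases hcog with h | h
        · exact ⟨A, by simp, h⟩
        · exact ⟨B, by simp, h⟩
      · exact ⟨C, by simp [hC], hcog⟩
    obtain ⟨⟨A', hA', ha⟩, ⟨B', hB', hb⟩, hne, hdual⟩ := ih a b key
    have memconv : ∀ (x : Lit) (D : OForm), D ∈ (A ::ₘ B ::ₘ Γ) → x ∈ D.lits →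
        ∃ E ∈ OForm.par A B ::ₘ Γ, x ∈ E.lits := by
      intro x D hD hx
      rcases Multiset.mem_cons.1 hD with h | hD
      · exact ⟨OForm.par A B, Multiset.mem_cons_self _ _,
          List.mem_append_left _ (h ▸ hx)⟩
      rcases Multiset.mem_cons.1 hD with h | hD
      · exact ⟨OForm.par A B, Multiset.mem_cons_self _ _,
          List.mem_append_right _ (h ▸ hx)⟩
      · exact ⟨D, Multiset.mem_cons_of_mem hD, hx⟩
    exact ⟨memconv a A' hA' ha, memconv b B' hB' hb, hne, hdual⟩
  | tensR Γ Δ A B _ _ hdisj ihA ihB =>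
    rintro a b ⟨C, hC, hcog⟩
    -- membership transfer lemmas
    have memA : ∀ (x : Lit) (D : OForm), D ∈ (A ::ₘ Γ) → x ∈ D.lits →
        ∃ E ∈ OForm.tens A B ::ₘ (Γ + Δ), x ∈ E.lits := by
      intro x D hD hx
      rcases Multiset.mem_cons.1 hD with rfl | hD
      · exact ⟨OForm.tens D B, Multiset.mem_cons_self _ _, List.mem_append_left _ hx⟩
      · exact ⟨D, Multiset.mem_cons_of_mem (Multiset.mem_add.2 (Or.inl hD)), hx⟩
    have memB : ∀ (x : Lit) (D : OForm), D ∈ (B ::ₘ Δ) → x ∈ D.lits →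
        ∃ E ∈ OForm.tens A B ::ₘ (Γ + Δ), x ∈ E.lits := by
      intro x D hD hx
      rcases Multiset.mem_cons.1 hD with rfl | hD
      · exact ⟨OForm.tens A D, Multiset.mem_cons_self _ _, List.mem_append_right _ hx⟩
      · exact ⟨D, Multiset.mem_cons_of_mem (Multiset.mem_add.2 (Or.inr hD)), hx⟩
    have cross : ∀ x y : Lit, x ∈ A.lits → y ∈ B.lits →
        (∃ E ∈ OForm.tens A B ::ₘ (Γ + Δ), x ∈ E.lits) ∧
        (∃ E ∈ OForm.tens A B ::ₘ (Γ + Δ), y ∈ E.lits) ∧ x ≠ y ∧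
        ¬ (x.2 = y.2 ∧ x.1 ≠ y.1) := by
      intro x y hx hy
      have hxm : x.2 ∈ idsSeq (A ::ₘ Γ) := snd_mem_idsSeq (Multiset.mem_cons_self _ _) hx
      have hym : y.2 ∈ idsSeq (B ::ₘ Δ) := snd_mem_idsSeq (Multiset.mem_cons_self _ _) hy
      have hne2 : x.2 ≠ y.2 := by
        intro e
        exact Multiset.disjoint_left.1 hdisj hxm (e ▸ hym)
      refine ⟨memA x A (Multiset.mem_cons_self _ _) hx,
        memB y B (Multiset.mem_cons_self _ _) hy, ?_, ?_⟩
      · intro e; exact hne2 (by rw [e])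
      · rintro ⟨e, _⟩; exact hne2 e
    rcases Multiset.mem_cons.1 hC with rfl | hC
    · rcases hcog with h | h | ⟨h1, h2⟩ | ⟨h1, h2⟩
      · obtain ⟨⟨A', hA', ha⟩, ⟨B', hB', hb⟩, hne, hd⟩ := ihA a b ⟨A, by simp, h⟩
        exact ⟨memA a A' hA' ha, memA b B' hB' hb, hne, hd⟩
      · obtain ⟨⟨A', hA', ha⟩, ⟨B', hB', hb⟩, hne, hd⟩ := ihB a b ⟨B, by simp, h⟩
        exact ⟨memB a A' hA' ha, memB b B' hB' hb, hne, hd⟩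
      · exact cross a b h1 h2
      · obtain ⟨m1, m2, hne, hd⟩ := cross b a h2 h1
        exact ⟨m2, m1, hne.symm, fun ⟨e, p⟩ => hd ⟨e.symm, p.symm⟩⟩
    · rcases Multiset.mem_add.1 hC with hC | hC
      · obtain ⟨⟨A', hA', ha⟩, ⟨B', hB', hb⟩, hne, hd⟩ :=
          ihA a b ⟨C, Multiset.mem_cons_of_mem hC, hcog⟩
        exact ⟨memA a A' hA' ha, memA b B' hB' hb, hne, hd⟩
      · obtain ⟨⟨A', hA', ha⟩, ⟨B', hB', hb⟩, hne, hd⟩ :=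
          ihB a b ⟨C, Multiset.mem_cons_of_mem hC, hcog⟩
        exact ⟨memB a A' hA' ha, memB b B' hB' hb, hne, hd⟩
end

section
/- In a handsome proof net (B, R) where R contains a cut, i.e., R = T ⅋̂ (K ⊗̂ K⊥), one step of cut elimination (replacing the cut on compound K = K₁ * K₂ by the corresponding smaller cuts: (K₁⊗̂K₂)⊗̂(K₁⊥⅋̂K₂⊥) reduces to (K₁⊗̂K₁⊥) ⅋̂ (K₂⊗̂K₂⊥), and (K₁◁̂K₂)⊗̂(K₁⊥◁̂K₂⊥) reduces to (K₁⊗̂K₁⊥) ◁̂ (K₂⊗̂K₂⊥)) preserves the correctness criterion: if (B,R) has no chordless alternating elementary circuit, neither does the reduct. -/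
section Correctness

variable {V : Type} [Inhabited V]

/-- `l` is an alternating elementary circuit of the proof structure with axiom matching
`b` and dicograph `R`: a nonempty cycle of even length without repeated vertices whose
steps alternately follow a `B` (axiom) edge and an `R` pair (an `R` edge in either
direction or an `R` arc forwards — i.e. exactly `R x y` allows the step `x` to `y`). -/
def IsAECircuit (b : V → V) (R : V → V → Prop) (l : List V) : Prop :=
  l ≠ [] ∧ l.length % 2 = 0 ∧ l.Nodup ∧
    ∀ i : ℕ, i < l.length →
      (i % 2 = 0 → b (l.getD i default) = l.getD ((i + 1) % l.length) default) ∧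
      (i % 2 = 1 → R (l.getD i default) (l.getD ((i + 1) % l.length) default))

/-- `(x, y)` is one of the (directed) steps of the circuit `l`. -/
def CircStep (l : List V) (x y : V) : Prop :=
  ∃ i : ℕ, i < l.length ∧ l.getD i default = x ∧ l.getD ((i + 1) % l.length) default = y

/-- The circuit `l` has a chord: an `R` edge or arc between two of its vertices which is
neither a step of the circuit nor the reverse of one. -/
def HasChord (R : V → V → Prop) (l : List V) : Prop :=
  ∃ x ∈ l, ∃ y ∈ l, R x y ∧ ¬ CircStep l x y ∧ ¬ CircStep l y x

/-- The correctness criterion for handsome proof structures: every alternating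
elementary circuit has a chord. -/
def Correct (b : V → V) (R : V → V → Prop) : Prop :=
  ∀ l : List V, IsAECircuit b R l → HasChord R l

end Correctness

/-- The dual of a dicograph term, on the dual atoms given by the matching `b`:
`⊗` and `⅋` are exchanged and `◁` is fixed. -/
def dualT {V : Type} (b : V → V) : DTerm V → DTerm V
  | DTerm.leaf v => DTerm.leaf (b v)
  | DTerm.par s t => DTerm.tens (dualT b s) (dualT b t)
  | DTerm.tens s t => DTerm.par (dualT b s) (dualT b t)
  | DTerm.seq s t => DTerm.seq (dualT b s) (dualT b t)

open DTerm

/-- The structure `T ⅋̂ ((K₁ ⊗ K₂) ⊗̂ (K₁ ⊗ K₂)⊥)` with a `⊗`-cut. -/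
def tensCutRedex {V : Type} (b : V → V) (T K₁ K₂ : DTerm V) : DTerm V :=
  par T (tens (tens K₁ K₂) (par (dualT b K₁) (dualT b K₂)))

/-- Its reduct `T ⅋̂ ((K₁ ⊗̂ K₁⊥) ⅋̂ (K₂ ⊗̂ K₂⊥))`: two smaller parallel cuts. -/
def tensCutReduct {V : Type} (b : V → V) (T K₁ K₂ : DTerm V) : DTerm V :=
  par T (par (tens K₁ (dualT b K₁)) (tens K₂ (dualT b K₂)))

/-- The structure `T ⅋̂ ((K₁ ◁ K₂) ⊗̂ (K₁ ◁ K₂)⊥)` with a `◁`-cut. -/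
def seqCutRedex {V : Type} (b : V → V) (T K₁ K₂ : DTerm V) : DTerm V :=
  par T (tens (seq K₁ K₂) (seq (dualT b K₁) (dualT b K₂)))

/-- Its reduct `T ⅋̂ ((K₁ ⊗̂ K₁⊥) ◁̂ (K₂ ⊗̂ K₂⊥))`: two smaller ordered cuts. -/
def seqCutReduct {V : Type} (b : V → V) (T K₁ K₂ : DTerm V) : DTerm V :=
  par T (seq (tens K₁ (dualT b K₁)) (tens K₂ (dualT b K₂)))


/-!
Put the atoms of `T` in zone 0 and those of the two smaller cuts `K₁ ⊗̂ K₁⊥`, `K₂ ⊗̂ K₂⊥`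
in zones 1 and 2. Axiom links stay inside a zone and every `R`-pair of the reduct goes weakly
up, so an alternating circuit of the reduct lies in a single zone. Since the reduct's `R` is
contained in the redex's, the circuit is also one of the redex, and has a chord there; that
chord joins two atoms of the same zone, where the redex and the reduct have the same edges.
-/

section Circuit

variable {V : Type} [Inhabited V] {b : V → V} {R R' : V → V → Prop} {l : List V}

lemma IsAECircuit.mono (hRR' : ∀ x y, R x y → R' x y) (hl : IsAECircuit b R l) :
    IsAECircuit b R' l :=
  let ⟨hne, heven, hnodup, hstep⟩ := hl
  ⟨hne, heven, hnodup, fun i hi => ⟨(hstep i hi).1, fun h => hRR' _ _ ((hstep i hi).2 h)⟩⟩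

lemma IsAECircuit.le_of_circStep {α : Type*} [Preorder α] {z : V → α}
    (hzb : ∀ v, z (b v) = z v) (hRz : ∀ x y, R x y → z x ≤ z y) (hl : IsAECircuit b R l)
    {x y : V} (hxy : CircStep l x y) : z x ≤ z y := by
  obtain ⟨i, hi, rfl, rfl⟩ := hxy
  rcases Nat.mod_two_eq_zero_or_one i with h | h
  · rw [← (hl.2.2.2 i hi).1 h, hzb]
  · exact hRz _ _ ((hl.2.2.2 i hi).2 h)

lemma le_of_forall_circStep_le {α : Type*} [Preorder α] {z : V → α}
    (h : ∀ x y, CircStep l x y → z x ≤ z y) {x y : V} (hx : x ∈ l) (hy : y ∈ l) :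
    z x ≤ z y := by
  set n := l.length
  set f : ℕ → α := fun i => z (l.getD i default)
  have hpos : 0 < n := List.length_pos_of_mem hx
  have hstep : ∀ i < n, f i ≤ f ((i + 1) % n) := fun i hi => h _ _ ⟨i, hi, rfl, rfl⟩
  have hmono : Monotone fun i => f (min i (n - 1)) := by
    refine monotone_nat_of_le_succ fun i => ?_
    rcases lt_or_ge i (n - 1) with hi | hi
    · simpa [min_eq_left hi.le, min_eq_left (Nat.succ_le_of_lt hi),
        Nat.mod_eq_of_lt (by omega : i + 1 < n)] using hstep i (by omega)
    · simp [min_eq_right hi, min_eq_right (by omega : n - 1 ≤ i + 1)]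
  have hwrap : f (n - 1) ≤ f 0 := by
    simpa [Nat.sub_add_cancel hpos] using hstep (n - 1) (by omega)
  obtain ⟨i, hi, rfl⟩ := List.getElem_of_mem hx
  obtain ⟨j, hj, rfl⟩ := List.getElem_of_mem hy
  have hf : ∀ k (hk : k < n), z l[k] = f (min k (n - 1)) := fun k hk => by
    simp [f, min_eq_left (by omega : k ≤ n - 1), List.getElem?_eq_getElem hk]
  calc z l[i] = f (min i (n - 1)) := hf i hi
    _ ≤ f (min (n - 1) (n - 1)) := hmono (by omega)
    _ ≤ f (min 0 (n - 1)) := by simpa using hwrap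
    _ ≤ f (min j (n - 1)) := hmono (Nat.zero_le j)
    _ = z l[j] := (hf j hj).symm

theorem Correct.of_zone {α : Type*} [PartialOrder α] (z : V → α) (hzb : ∀ v, z (b v) = z v)
    (hR'R : ∀ x y, R' x y → R x y) (hR'z : ∀ x y, R' x y → z x ≤ z y)
    (hRz : ∀ x y, R x y → z x = z y → R' x y) (h : Correct b R) : Correct b R' := by
  intro l hl
  obtain ⟨x, hx, y, hy, hxy, hnxy, hnyx⟩ := h l (hl.mono hR'R)
  have hle : ∀ u v, CircStep l u v → z u ≤ z v := fun _ _ => hl.le_of_circStep hzb hR'z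
  exact ⟨x, hx, y, hy, hRz x y hxy (le_antisymm (le_of_forall_circStep_le hle hx hy)
    (le_of_forall_circStep_le hle hy hx)), hnxy, hnyx⟩

end Circuit

namespace DTerm

variable {V : Type}

lemma mem_leaves_of_rel_s15 {s : DTerm V} {x y : V} (h : rel s x y) :
    x ∈ s.leaves ∧ y ∈ s.leaves := by
  induction s with
  | leaf => exact h.elim
  | par s t ihs iht | tens s t ihs iht | seq s t ihs iht =>
    simp only [rel, leaves, List.mem_append] at h ⊢
    aesop

lemma eq_of_rel_of_forall_mem_eq {α : Type*} {s : DTerm V} {z : V → α} {c : α}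
    (hz : ∀ v ∈ s.leaves, z v = c) {x y : V} (h : rel s x y) : z x = z y := by
  rw [hz x (mem_leaves_of_rel_s15 h).1, hz y (mem_leaves_of_rel_s15 h).2]

lemma rel_seq_of_rel_par {s t : DTerm V} {x y : V} (h : rel (par s t) x y) :
    rel (seq s t) x y :=
  h.imp_right .inl

end DTerm

def cut {V : Type} (b : V → V) (K : DTerm V) : DTerm V :=
  tens K (dualT b K)

lemma apply_mem_leaves_cut_iff {V : Type} {b : V → V} (hb : Function.Involutive b)
    (K : DTerm V) (v : V) : b v ∈ (cut b K).leaves ↔ v ∈ (cut b K).leaves := by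
  have hdual : ∀ w, w ∈ (dualT b K).leaves ↔ b w ∈ K.leaves := by
    intro w
    induction K <;> simp_all [dualT, leaves, hb.eq_iff]
  simp only [cut, leaves, List.mem_append, hdual, hb v]
  exact or_comm

section CutZone

variable {V : Type} (C₁ C₂ : DTerm V)

open Classical in
noncomputable def cutZone (v : V) : ℕ :=
  if v ∈ C₁.leaves then 1 else if v ∈ C₂.leaves then 2 else 0

variable {C₁ C₂} {v : V}

lemma cutZone_of_mem_left (h : v ∈ C₁.leaves) : cutZone C₁ C₂ v = 1 := by
  simp [cutZone, h]

lemma cutZone_of_mem_right (h₁₂ : C₁.leaves.Disjoint C₂.leaves) (h : v ∈ C₂.leaves) :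
    cutZone C₁ C₂ v = 2 := by
  simp [cutZone, h, List.disjoint_right.mp h₁₂ h]

lemma cutZone_of_not_mem (h₁ : v ∉ C₁.leaves) (h₂ : v ∉ C₂.leaves) : cutZone C₁ C₂ v = 0 := by
  simp [cutZone, h₁, h₂]

lemma cutZone_apply_eq {f : V → V} (hf₁ : ∀ v, f v ∈ C₁.leaves ↔ v ∈ C₁.leaves)
    (hf₂ : ∀ v, f v ∈ C₂.leaves ↔ v ∈ C₂.leaves) (v : V) :
    cutZone C₁ C₂ (f v) = cutZone C₁ C₂ v := by
  unfold cutZone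
  split_ifs <;> simp_all

lemma cutZone_ne (h₁₂ : C₁.leaves.Disjoint C₂.leaves) {x y : V} (hx : x ∈ C₁.leaves)
    (hy : y ∈ C₂.leaves) : cutZone C₁ C₂ x ≠ cutZone C₁ C₂ y := by
  simp [cutZone_of_mem_left hx, cutZone_of_mem_right h₁₂ hy]

lemma cutZone_le_of_rel {T : DTerm V} (hT : T.leaves.Disjoint (C₁.leaves ++ C₂.leaves))
    (h₁₂ : C₁.leaves.Disjoint C₂.leaves) {x y : V} (h : rel (par T (seq C₁ C₂)) x y) :
    cutZone C₁ C₂ x ≤ cutZone C₁ C₂ y := by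
  rcases h with h | h | h | ⟨hx, hy⟩
  · refine (eq_of_rel_of_forall_mem_eq (c := 0) (fun v hv => ?_) h).le
    have hv' := List.disjoint_left.mp hT hv
    rw [List.mem_append, not_or] at hv'
    exact cutZone_of_not_mem hv'.1 hv'.2
  · exact (eq_of_rel_of_forall_mem_eq (fun _ => cutZone_of_mem_left) h).le
  · exact (eq_of_rel_of_forall_mem_eq (fun _ => cutZone_of_mem_right h₁₂) h).le
  · rw [cutZone_of_mem_left hx, cutZone_of_mem_right h₁₂ hy]
    decide

end CutZone

section CutReduction

variable {V : Type} {b : V → V} {T K₁ K₂ : DTerm V} {x y : V}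

lemma rel_tensCutRedex_of_rel_tensCutReduct (h : rel (tensCutReduct b T K₁ K₂) x y) :
    rel (tensCutRedex b T K₁ K₂) x y := by
  simp only [tensCutReduct, tensCutRedex, rel, leaves, List.mem_append] at h ⊢
  tauto

lemma rel_seqCutRedex_of_rel_seqCutReduct (h : rel (seqCutReduct b T K₁ K₂) x y) :
    rel (seqCutRedex b T K₁ K₂) x y := by
  simp only [seqCutReduct, seqCutRedex, rel, leaves, List.mem_append] at h ⊢
  tauto

lemma rel_tensCutReduct_of_rel_tensCutRedex (h : rel (tensCutRedex b T K₁ K₂) x y)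
    (h₁₂ : ¬(x ∈ (cut b K₁).leaves ∧ y ∈ (cut b K₂).leaves))
    (h₂₁ : ¬(x ∈ (cut b K₂).leaves ∧ y ∈ (cut b K₁).leaves)) :
    rel (tensCutReduct b T K₁ K₂) x y := by
  simp only [tensCutReduct, tensCutRedex, cut, rel, leaves, List.mem_append] at h h₁₂ h₂₁ ⊢
  tauto

lemma rel_seqCutReduct_of_rel_seqCutRedex (h : rel (seqCutRedex b T K₁ K₂) x y)
    (h₁₂ : ¬(x ∈ (cut b K₁).leaves ∧ y ∈ (cut b K₂).leaves))
    (h₂₁ : ¬(x ∈ (cut b K₂).leaves ∧ y ∈ (cut b K₁).leaves)) :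
    rel (seqCutReduct b T K₁ K₂) x y := by
  simp only [seqCutReduct, seqCutRedex, cut, rel, leaves, List.mem_append] at h h₁₂ h₂₁ ⊢
  tauto

lemma disjoint_leaves_cut_of_nodup (h : (tensCutRedex b T K₁ K₂).leaves.Nodup) :
    T.leaves.Disjoint ((cut b K₁).leaves ++ (cut b K₂).leaves) ∧
      (cut b K₁).leaves.Disjoint (cut b K₂).leaves := by
  have hperm : (tensCutRedex b T K₁ K₂).leaves.Perm
      (T.leaves ++ ((cut b K₁).leaves ++ (cut b K₂).leaves)) := by
    simp only [tensCutRedex, cut, leaves, List.append_assoc]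
    exact .append_left _ (.append_left _ (List.perm_append_comm_assoc _ _ _))
  obtain ⟨-, hcuts, hT⟩ := List.nodup_append'.mp (hperm.nodup_iff.mp h)
  exact ⟨hT, List.disjoint_of_nodup_append hcuts⟩

end CutReduction

section CutStep

variable {V : Type} [Inhabited V] {b : V → V} {T K₁ K₂ : DTerm V}

lemma correct_tensCutReduct (hb : Function.Involutive b)
    (hT : T.leaves.Disjoint ((cut b K₁).leaves ++ (cut b K₂).leaves))
    (h₁₂ : (cut b K₁).leaves.Disjoint (cut b K₂).leaves)
    (h : Correct b (rel (tensCutRedex b T K₁ K₂))) :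
    Correct b (rel (tensCutReduct b T K₁ K₂)) :=
  h.of_zone (cutZone (cut b K₁) (cut b K₂))
    (cutZone_apply_eq (apply_mem_leaves_cut_iff hb K₁) (apply_mem_leaves_cut_iff hb K₂))
    (fun _ _ => rel_tensCutRedex_of_rel_tensCutReduct)
    (fun _ _ hxy => cutZone_le_of_rel hT h₁₂ (hxy.imp_right rel_seq_of_rel_par))
    (fun _ _ hxy hz => rel_tensCutReduct_of_rel_tensCutRedex hxy
      (fun ⟨hx, hy⟩ => cutZone_ne h₁₂ hx hy hz) (fun ⟨hx, hy⟩ => cutZone_ne h₁₂ hy hx hz.symm))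

lemma correct_seqCutReduct (hb : Function.Involutive b)
    (hT : T.leaves.Disjoint ((cut b K₁).leaves ++ (cut b K₂).leaves))
    (h₁₂ : (cut b K₁).leaves.Disjoint (cut b K₂).leaves)
    (h : Correct b (rel (seqCutRedex b T K₁ K₂))) :
    Correct b (rel (seqCutReduct b T K₁ K₂)) :=
  h.of_zone (cutZone (cut b K₁) (cut b K₂))
    (cutZone_apply_eq (apply_mem_leaves_cut_iff hb K₁) (apply_mem_leaves_cut_iff hb K₂))
    (fun _ _ => rel_seqCutRedex_of_rel_seqCutReduct)
    (fun _ _ => cutZone_le_of_rel hT h₁₂)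
    (fun _ _ hxy hz => rel_seqCutReduct_of_rel_seqCutRedex hxy
      (fun ⟨hx, hy⟩ => cutZone_ne h₁₂ hx hy hz) (fun ⟨hx, hy⟩ => cutZone_ne h₁₂ hy hx hz.symm))

end CutStep

theorem cut_step_preserves_correctness_general {V : Type} [Inhabited V]
    (b : V → V) (hinv : ∀ v, b (b v) = v)
    (T K₁ K₂ : DTerm V)
    (hnodup₁ : (tensCutRedex b T K₁ K₂).leaves.Nodup) :
    (Correct b (rel (tensCutRedex b T K₁ K₂)) →
      Correct b (rel (tensCutReduct b T K₁ K₂))) ∧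
    (Correct b (rel (seqCutRedex b T K₁ K₂)) →
      Correct b (rel (seqCutReduct b T K₁ K₂))) :=
  let ⟨hT, h₁₂⟩ := disjoint_leaves_cut_of_nodup hnodup₁
  ⟨correct_tensCutReduct hinv hT h₁₂, correct_seqCutReduct hinv hT h₁₂⟩

/-- one step of cut elimination on a compound cut preserves the
correctness criterion of handsome proof nets, both for `⊗`-cuts and `◁`-cuts. -/
theorem cut_step_preserves_correctness {V : Type} [Inhabited V]
    (b : V → V) (hinv : ∀ v, b (b v) = v) (hfix : ∀ v, b v ≠ v)
    (T K₁ K₂ : DTerm V)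
    (hnodup₁ : (tensCutRedex b T K₁ K₂).leaves.Nodup)
    (hnodup₂ : (seqCutRedex b T K₁ K₂).leaves.Nodup) :
    (Correct b (rel (tensCutRedex b T K₁ K₂)) →
      Correct b (rel (tensCutReduct b T K₁ K₂))) ∧
    (Correct b (rel (seqCutRedex b T K₁ K₂)) →
      Correct b (rel (seqCutReduct b T K₁ K₂))) :=
  cut_step_preserves_correctness_general b hinv T K₁ K₂ hnodup₁
end

section
/- The rewriting rule ⊗⅋4: (X⅋Y)⊗(U⅋V) ⇝ (X⊗U)⅋(Y⊗V) does not preserve the proof-net correctness criterion: for B = {a—a⊥, b—b⊥} and R = (a ⅋̂ a⊥) ⊗̂ (b ⅋̂ b⊥), the structure (B,R) is a correct proof net, but after applying ⊗⅋4 to obtain R' = (a ⊗̂ b) ⅋̂ (a⊥ ⊗̂ b⊥), the structure (B,R') contains a chordless alternating elementary circuit (namely a, a⊥, b⊥, b). -/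
open DTerm

/-- Atoms: `a = 0`, `a⊥ = 1`, `b = 2`, `b⊥ = 3`; the axiom matching `B`. -/
def bMatch : Fin 4 → Fin 4 := ![1, 0, 3, 2]

/-- `R = (a ⅋̂ a⊥) ⊗̂ (b ⅋̂ b⊥)`. -/
def R16 : DTerm (Fin 4) :=
  tens (par (leaf 0) (leaf 1)) (par (leaf 2) (leaf 3))

/-- `R' = (a ⊗̂ b) ⅋̂ (a⊥ ⊗̂ b⊥)`, the result of applying `⊗⅋4`. -/
def R16' : DTerm (Fin 4) :=
  par (tens (leaf 0) (leaf 2)) (tens (leaf 1) (leaf 3))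

/-!
An elementary circuit visits each atom at most once, so on finitely many atoms correctness is a
check over the lists no longer than the number of atoms, and both structures are settled by
evaluation. The reason behind the outcome: no axiom pair is linked in `R` or `R'`, so an
alternating circuit has the form `x, x⊥, y⊥, y` with `x` and `y` from different axiom pairs, and
its only possible chords are `x — y⊥` and `x⊥ — y`. Since `R` joins each of `a, a⊥` to each of
`b, b⊥`, these chords are present; `⊗⅋4` removes exactly the edges `a — b⊥` and `a⊥ — b`, leaving
`a, a⊥, b⊥, b` chordless in `R'`.
-/

namespace DTerm

variable {V : Type}

instance decidableRel [DecidableEq V] : (t : DTerm V) → DecidableRel t.rel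
  | leaf _ => fun _ _ => inferInstanceAs (Decidable False)
  | par s t => fun _ _ =>
      letI := s.decidableRel; letI := t.decidableRel; inferInstanceAs (Decidable (_ ∨ _))
  | tens s t => fun _ _ =>
      letI := s.decidableRel; letI := t.decidableRel; inferInstanceAs (Decidable (_ ∨ _ ∨ _ ∨ _))
  | seq s t => fun _ _ =>
      letI := s.decidableRel; letI := t.decidableRel; inferInstanceAs (Decidable (_ ∨ _ ∨ _))

end DTerm

section Correctness

variable {V : Type} [Inhabited V] {b : V → V} {R : V → V → Prop}

instance [DecidableEq V] (l : List V) (x y : V) : Decidable (CircStep l x y) := by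
  unfold CircStep; infer_instance

instance [DecidableEq V] [DecidableRel R] (l : List V) : Decidable (IsAECircuit b R l) := by
  unfold IsAECircuit; infer_instance

instance [DecidableEq V] [DecidableRel R] (l : List V) : Decidable (HasChord R l) := by
  unfold HasChord; infer_instance

theorem correct_iff_forall_ofFn [Fintype V] :
    Correct b R ↔ ∀ n ≤ Fintype.card V, ∀ f : Fin n → V,
      IsAECircuit b R (List.ofFn f) → HasChord R (List.ofFn f) := by
  refine ⟨fun h _ _ f => h (List.ofFn f), fun h l hl => ?_⟩
  have := h l.length hl.2.2.1.length_le_card l.get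
  rw [List.ofFn_get] at this
  exact this hl

instance [Fintype V] [DecidableEq V] [DecidableRel R] : Decidable (Correct b R) :=
  decidable_of_iff' _ correct_iff_forall_ofFn

theorem not_correct_of_not_hasChord {l : List V} (hl : IsAECircuit b R l)
    (hchord : ¬ HasChord R l) : ¬ Correct b R :=
  fun h => hchord (h l hl)

end Correctness

/-- the rule `⊗⅋4` does not preserve correctness: `(B, R)` is a correct
proof net, but `(B, R')` contains the chordless alternating elementary circuit
`a, a⊥, b⊥, b`. -/
theorem tp4_breaks_correctness :
    Correct bMatch (rel R16) ∧
    IsAECircuit bMatch (rel R16') [0, 1, 3, 2] ∧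
    ¬ HasChord (rel R16') [0, 1, 3, 2] ∧
    ¬ Correct bMatch (rel R16') := by
  have hcircuit : IsAECircuit bMatch (rel R16') [0, 1, 3, 2] := by decide
  have hchordless : ¬ HasChord (rel R16') [0, 1, 3, 2] := by decide
  -- the elaborator's `decide` times out on the few hundred candidate circuits; the kernel does not
  exact ⟨by decide +kernel, hcircuit, hchordless, not_correct_of_not_hasChord hcircuit hchordless⟩
end
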